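/- Let K ⊆ E₂ be a closed, convex cone, let F be K-convex with nonempty domain dom F ⊆ E₁, and let g : E₂ → ℝ ∪ {+∞} be proper and convex satisfying condition (M): g(F(x)) ≤ g(y) for every (x,y) ∈ epi_K F. Assume the qualification condition F(ri(dom F)) ∩ ri(dom g − K) ≠ ∅. Then for every p ∈ E₁ the infimum inf_{v ∈ −K°} (g*(v) + (⟨v,F⟩)*(p)) is attained (possibly with value +∞), and (g ∘ F)*(p) = min_{v ∈ −K°} (g*(v) + (⟨v,F⟩)*(p)); moreover dom (g ∘ F)* = {p ∈ E₁ : there exists v ∈ dom g* ∩ (−K°) with (⟨v,F⟩)*(p) < +∞}. -/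

import Mathlib

open scoped RealInnerProductSpace Pointwise
open Filter

noncomputable section

/-- Convexity of an extended-real-valued function, defined via convexity of its epigraph. -/
def EConvexOn {E : Type*} [AddCommGroup E] [Module ℝ E] (f : E → EReal) : Prop :=
  Convex ℝ {p : E × ℝ | f p.1 ≤ (p.2 : EReal)}

/-- Closedness (lower semicontinuity) of an extended-real-valued function,
defined via closedness of its epigraph. -/
def EClosed {E : Type*} [TopologicalSpace E] (f : E → EReal) : Prop :=
  IsClosed {p : E × ℝ | f p.1 ≤ (p.2 : EReal)}

/-- Properness: the domain is nonempty and the function never takes the value `-∞`. -/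
def EProper {E : Type*} (f : E → EReal) : Prop :=
  (∃ x, f x < ⊤) ∧ ∀ x, f x ≠ ⊥

/-- The (effective) domain of an extended-real-valued function. -/
def edom {E : Type*} (f : E → EReal) : Set E := {x | f x < ⊤}

/-- The Fenchel conjugate. -/
def econj {E : Type*} [NormedAddCommGroup E] [InnerProductSpace ℝ E]
    (f : E → EReal) (y : E) : EReal :=
  ⨆ x, ((⟪y, x⟫ : ℝ) : EReal) - f x

/-- The convex subdifferential of `f` at `x₀`. -/
def esubdiff {E : Type*} [NormedAddCommGroup E] [InnerProductSpace ℝ E]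
    (f : E → EReal) (x₀ : E) : Set E :=
  {w | ∀ x, f x₀ + ((⟪w, x - x₀⟫ : ℝ) : EReal) ≤ f x}

/-- `K` is a cone: it is stable under multiplication by nonnegative scalars. -/
def IsCone {E : Type*} [SMul ℝ E] (K : Set E) : Prop :=
  ∀ ⦃t : ℝ⦄, 0 ≤ t → ∀ ⦃x⦄, x ∈ K → t • x ∈ K

/-- The polar cone `K° = {v : ⟪v,x⟫ ≤ 0 for all x ∈ K}`. -/
def polarCone {E : Type*} [NormedAddCommGroup E] [InnerProductSpace ℝ E] (K : Set E) : Set E :=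
  {v | ∀ x ∈ K, ⟪v, x⟫ ≤ (0 : ℝ)}

/-- The `K`-epigraph of a map `F` with domain `D`. -/
def epiK {E₁ E₂ : Type*} [AddCommGroup E₂] (K : Set E₂) (D : Set E₁) (F : E₁ → E₂) :
    Set (E₁ × E₂) :=
  {p | p.1 ∈ D ∧ p.2 - F p.1 ∈ K}

/-- The graph of a map `F` with domain `D`. -/
def gphF {E₁ E₂ : Type*} (D : Set E₁) (F : E₁ → E₂) : Set (E₁ × E₂) :=
  {p | p.1 ∈ D ∧ p.2 = F p.1}

open Classical in
/-- The scalarization `⟨v,F⟩` of the map `F` with domain `D`: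
it equals `⟪v, F x⟫` on `D` and `+∞` elsewhere. -/
def scal {E₁ E₂ : Type*} [NormedAddCommGroup E₂] [InnerProductSpace ℝ E₂]
    (v : E₂) (D : Set E₁) (F : E₁ → E₂) : E₁ → EReal :=
  fun x => if x ∈ D then ((⟪v, F x⟫ : ℝ) : EReal) else ⊤

open Classical in
/-- The composition `g ∘ F` for a map `F` with domain `D`:
it equals `g (F x)` on `D` and `+∞` elsewhere. -/
def compFn {E₁ E₂ : Type*} (g : E₂ → EReal) (D : Set E₁) (F : E₁ → E₂) : E₁ → EReal :=
  fun x => if x ∈ D then g (F x) else ⊤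

open Classical in
/-- The indicator function of a set: `0` on `S` and `+∞` off `S`. -/
def eindicator {E : Type*} (S : Set E) (x : E) : EReal := if x ∈ S then 0 else ⊤

/-- The support function of a set. -/
def suppFn {E : Type*} [NormedAddCommGroup E] [InnerProductSpace ℝ E] (S : Set E) (y : E) :
    EReal :=
  ⨆ x ∈ S, ((⟪x, y⟫ : ℝ) : EReal)

/-- The support function of a subset of a product of two inner product spaces,
with respect to the natural sum inner product on the product. -/
def suppFn2 {E₁ E₂ : Type*} [NormedAddCommGroup E₁] [InnerProductSpace ℝ E₁]
    [NormedAddCommGroup E₂] [InnerProductSpace ℝ E₂]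
    (S : Set (E₁ × E₂)) (y : E₁ × E₂) : EReal :=
  ⨆ p ∈ S, ((⟪p.1, y.1⟫ + ⟪p.2, y.2⟫ : ℝ) : EReal)

/-- The horizon (recession) cone of a set `C`. -/
def horizonCone {E : Type*} [AddCommGroup E] [Module ℝ E] [TopologicalSpace E] (C : Set E) :
    Set E :=
  {w | ∀ x ∈ C, ∀ t : ℝ, 0 ≤ t → x + t • w ∈ closure C}

/-- The lower semicontinuous hull:
`(cl f)(x) = inf {a : ∃ xₖ → x with f (xₖ) → a}`. -/
def lscHull {E : Type*} [TopologicalSpace E] (f : E → EReal) (x : E) : EReal :=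
  sInf {a : EReal |
    ∃ u : ℕ → E, Tendsto u atTop (nhds x) ∧ Tendsto (fun n => f (u n)) atTop (nhds a)}

variable {E E₁ E₂ : Type*}
  [NormedAddCommGroup E] [InnerProductSpace ℝ E] [FiniteDimensional ℝ E]
  [NormedAddCommGroup E₁] [InnerProductSpace ℝ E₁] [FiniteDimensional ℝ E₁]
  [NormedAddCommGroup E₂] [InnerProductSpace ℝ E₂] [FiniteDimensional ℝ E₂]

/-!
Weak duality `(g ∘ F)* p ≤ g* v + ⟨v,F⟩* p` holds for every `v`. For the reverse inequality at a
point `p` where `a = (g ∘ F)* p` is finite, separate the origin from the strict epigraph `T` of the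
perturbation function `z ↦ a + inf {g y - ⟪p, x⟫ | x ∈ D, y ∈ F x + z + K}`; condition (M) and the
choice of `a` give `(0, 0) ∉ T`. A proper separation yields `(φ, c)` with `φ z ≤ c r` on `T`, not
everywhere an equality. The qualification condition rules out a vertical hyperplane `c = 0`, and
for `c > 0` the vector `v = φ / c` is a Lagrange multiplier: it lies in `-K°` because
`T - K × {0} ⊆ T`, and `⟪p, x⟫ - g y + ⟪v, y - F x⟫ ≤ a` for all `x ∈ D` and `y`, which says
`g* v + ⟨v,F⟩* p ≤ a`.
-/

open Topology

theorem nonpos_of_forall_add_mul_le {a b c : ℝ} (h : ∀ t : ℝ, 0 ≤ t → a + t * b ≤ c) : b ≤ 0 := by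
  by_contra! hb
  have hac : a ≤ c := by simpa using h 0 le_rfl
  have := h ((c - a + 1) / b) (by positivity)
  rw [div_mul_cancel₀ _ hb.ne'] at this
  linarith

theorem eventually_add_smul_mem_of_mem_intrinsicInterior {P : Type*} [NormedAddCommGroup P]
    [NormedSpace ℝ P] {s : Set P} {x d : P} (hx : x ∈ intrinsicInterior ℝ s)
    (hd : d ∈ (affineSpan ℝ s).direction) : ∀ᶠ t in 𝓝 (0 : ℝ), x + t • d ∈ s := by
  obtain ⟨y, hy, rfl⟩ := hx
  let γ : ℝ → affineSpan ℝ s := fun t =>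
    ⟨y + t • d, by simpa [vadd_eq_add, add_comm] using
      AffineSubspace.vadd_mem_of_mem_direction (Submodule.smul_mem _ t hd) y.2⟩
  have hγ : Tendsto γ (𝓝 0) (𝓝 y) := by
    have : Continuous γ := by fun_prop
    simpa [γ] using this.tendsto 0
  filter_upwards [hγ (isOpen_interior.mem_nhds hy)] with t ht
  exact interior_subset (s := Subtype.val ⁻¹' s) ht

theorem Filter.Eventually.exists_pos {P : ℝ → Prop} (h : ∀ᶠ t in 𝓝 0, P t) : ∃ t > 0, P t :=
  (Filter.Eventually.and (self_mem_nhdsWithin : ∀ᶠ t in 𝓝[>] (0 : ℝ), 0 < t)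
    (h.filter_mono nhdsWithin_le_nhds)).exists

theorem affineSpan_add_eq_top_of_sup_eq_top {k V : Type*} [Ring k] [AddCommGroup V] [Module k V]
    {C : Set V} (h0 : (0 : V) ∈ affineSpan k C) {S : Submodule k V}
    (hS : Submodule.span k C ⊔ S = ⊤) : affineSpan k (C + (S : Set V)) = ⊤ := by
  obtain ⟨c₀, hc₀⟩ := (affineSpan_nonempty k).1 ⟨0, h0⟩
  have hCW : C ⊆ C + (S : Set V) := fun c hc => ⟨c, hc, 0, S.zero_mem, add_zero c⟩
  have hspan : Submodule.span k C ≤ vectorSpan k (C + (S : Set V)) := by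
    refine Submodule.span_le.2 fun c hc => ?_
    simpa [direction_affineSpan] using AffineSubspace.vsub_mem_direction
      (subset_affineSpan k _ (hCW hc)) (affineSpan_mono k hCW h0)
  have hS' : S ≤ vectorSpan k (C + (S : Set V)) := fun u hu => by
    simpa using vsub_mem_vectorSpan k (Set.add_mem_add hc₀ hu) (hCW hc₀)
  rw [AffineSubspace.affineSpan_eq_top_iff_vectorSpan_eq_top_of_nonempty k V V ⟨c₀, hCW hc₀⟩,
    eq_top_iff, ← hS]
  exact sup_le hspan hS'

theorem exists_proper_separation_of_zero_mem_affineSpan {V : Type*} [NormedAddCommGroup V]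
    [NormedSpace ℝ V] [FiniteDimensional ℝ V] {C : Set V} (hC : Convex ℝ C)
    (h0 : (0 : V) ∈ affineSpan ℝ C) (h0C : (0 : V) ∉ C) :
    ∃ f : StrongDual ℝ V, (∀ x ∈ C, f x ≤ 0) ∧ ∃ x ∈ C, f x < 0 := by
  -- Thicken `C` by a complement `S` of its span to get a convex set with nonempty interior.
  obtain ⟨S, hS⟩ := Submodule.exists_isCompl (Submodule.span ℝ C)
  set W := C + (S : Set V)
  have hW : Convex ℝ W := hC.add S.convex
  have h0W : (0 : V) ∉ W := by
    rintro ⟨c, hc, u, hu, hcu⟩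
    have hcS : c ∈ S := by rw [eq_neg_of_add_eq_zero_left hcu]; exact neg_mem hu
    have hc0 := Submodule.disjoint_def.1 hS.disjoint c (Submodule.subset_span hc) hcS
    exact h0C (hc0 ▸ hc)
  obtain ⟨f, hf⟩ := geometric_hahn_banach_open_point hW.interior isOpen_interior
    fun h => h0W (interior_subset h)
  simp only [map_zero] at hf
  have hint : (interior W).Nonempty := hW.interior_nonempty_iff_affineSpan_eq_top.2
    (affineSpan_add_eq_top_of_sup_eq_top h0 hS.sup_eq_top)
  have hfW : ∀ w ∈ W, f w ≤ 0 := by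
    have : closure (interior W) ⊆ {w | f w ≤ 0} :=
      closure_minimal (fun w hw => (hf w hw).le) (isClosed_le f.continuous continuous_const)
    rw [hW.closure_interior_eq_closure_of_nonempty_interior hint] at this
    exact fun w hw => this (subset_closure hw)
  -- `f` is bounded above on every line `c + ℝ • u` with `u ∈ S`, hence vanishes on `S`.
  have hfS : ∀ u ∈ S, f u = 0 := by
    obtain ⟨c₀, hc₀⟩ := (affineSpan_nonempty ℝ).1 ⟨0, h0⟩
    have hline : ∀ u ∈ S, f u ≤ 0 := fun u hu => nonpos_of_forall_add_mul_le fun t _ => by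
      simpa using hfW _ ⟨c₀, hc₀, t • u, S.smul_mem t hu, rfl⟩
    exact fun u hu => le_antisymm (hline u hu) (by simpa using hline (-u) (neg_mem hu))
  obtain ⟨_, hw⟩ := hint
  obtain ⟨c, hc, u, hu, rfl⟩ := interior_subset hw
  refine ⟨f, fun x hx => hfW x ⟨x, hx, 0, S.zero_mem, add_zero x⟩, c, hc, ?_⟩
  simpa [hfS u hu] using hf _ hw

theorem exists_proper_separation_of_upwardClosed {V : Type*} [NormedAddCommGroup V]
    [NormedSpace ℝ V] [FiniteDimensional ℝ V] {C : Set (V × ℝ)} (hC : Convex ℝ C)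
    (hup : ∀ ⦃z r r'⦄, (z, r) ∈ C → r ≤ r' → (z, r') ∈ C) {r₀ : ℝ} (hr₀ : ((0 : V), r₀) ∈ C)
    (h00 : ((0 : V), (0 : ℝ)) ∉ C) :
    ∃ (φ : StrongDual ℝ V) (c : ℝ), 0 ≤ c ∧ (∀ q ∈ C, φ q.1 ≤ c * q.2) ∧
      ∃ q ∈ C, φ q.1 < c * q.2 := by
  have h0 : ((0 : V), (0 : ℝ)) ∈ affineSpan ℝ C := by
    have hpair : ({(0, r₀), (0, r₀ + 1)} : Set (V × ℝ)) ⊆ C :=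
      Set.pair_subset hr₀ (hup hr₀ (by linarith))
    convert affineSpan_mono ℝ hpair
      (AffineMap.lineMap_mem_affineSpan_pair (-r₀) ((0 : V), r₀) ((0 : V), r₀ + 1)) using 1
    simp [AffineMap.lineMap_apply]
  obtain ⟨f, hfC, q, hq, hfq⟩ := exists_proper_separation_of_zero_mem_affineSpan hC h0 h00
  have hf : ∀ q : V × ℝ, f q = f (q.1, 0) + q.2 * f (0, 1) := fun q => by
    rw [← smul_eq_mul, ← map_smul, ← map_add]
    simp
  refine ⟨f.comp (ContinuousLinearMap.inl ℝ V ℝ), -f (0, 1), ?_, fun q hq => ?_, q, hq, ?_⟩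
  · refine neg_nonneg.2 (nonpos_of_forall_add_mul_le (a := f (0, r₀)) (c := 0) fun t ht => ?_)
    have := hfC _ (hup hr₀ (le_add_of_nonneg_right ht))
    rw [hf] at this ⊢
    simp only at this ⊢
    linarith
  · have := hfC q hq
    rw [hf] at this
    simp only [ContinuousLinearMap.comp_apply, ContinuousLinearMap.inl_apply]
    linarith
  · rw [hf] at hfq
    simp only [ContinuousLinearMap.comp_apply, ContinuousLinearMap.inl_apply]
    linarith

theorem EConvexOn.convex_strictEpigraph {P : Type*} [AddCommGroup P] [Module ℝ P]
    {g : P → EReal} (hg : EConvexOn g) : Convex ℝ {q : P × ℝ | g q.1 < q.2} := by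
  rintro ⟨y₁, r₁⟩ h₁ ⟨y₂, r₂⟩ h₂ a b ha hb hab
  obtain ⟨s₁, hs₁, hsr₁⟩ := EReal.lt_iff_exists_real_btwn.1 h₁
  obtain ⟨s₂, hs₂, hsr₂⟩ := EReal.lt_iff_exists_real_btwn.1 h₂
  have hle : g (a • y₁ + b • y₂) ≤ ((a * s₁ + b * s₂ : ℝ) : EReal) := by
    simpa using hg (x := (y₁, s₁)) hs₁.le (y := (y₂, s₂)) hs₂.le ha hb hab
  have hlt : a * s₁ + b * s₂ < a * r₁ + b * r₂ := by
    have h₁ : s₁ < r₁ := EReal.coe_lt_coe_iff.1 hsr₁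
    have h₂ : s₂ < r₂ := EReal.coe_lt_coe_iff.1 hsr₂
    rcases ha.eq_or_lt with rfl | ha
    · obtain rfl : b = 1 := by simpa using hab
      linarith
    · nlinarith [mul_pos ha (sub_pos.2 h₁), mul_nonneg hb (sub_pos.2 h₂).le]
  exact hle.trans_lt (by exact_mod_cast hlt)

theorem IsCone.zero_mem {P : Type*} [AddCommGroup P] [Module ℝ P] {K : Set P} (hK : IsCone K)
    (hne : K.Nonempty) : (0 : P) ∈ K := by
  obtain ⟨k, hk⟩ := hne
  simpa using hK le_rfl hk

theorem IsCone.add_mem {P : Type*} [AddCommGroup P] [Module ℝ P] {K : Set P} (hK : IsCone K)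
    (hconv : Convex ℝ K) {k₁ k₂ : P} (hk₁ : k₁ ∈ K) (hk₂ : k₂ ∈ K) : k₁ + k₂ ∈ K := by
  have := hK zero_le_two (hconv hk₁ hk₂ (by norm_num) (by norm_num) (add_halves 1))
  simpa [smul_add, smul_smul] using this

section QualificationCondition

variable {X Y : Type*} [NormedAddCommGroup X] [NormedSpace ℝ X]
  [NormedAddCommGroup Y] [NormedSpace ℝ Y] {K : Set Y} {D : Set X} {F : X → Y}

theorem sub_mem_of_convex_epiK (hF : Convex ℝ (epiK K D F)) (h0K : (0 : Y) ∈ K)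
    {x₁ x₂ : X} (h₁ : x₁ ∈ D) (h₂ : x₂ ∈ D) {a b : ℝ} (ha : 0 ≤ a) (hb : 0 ≤ b)
    (hab : a + b = 1) : a • F x₁ + b • F x₂ - F (a • x₁ + b • x₂) ∈ K := by
  have hmem : ∀ x ∈ D, (x, F x) ∈ epiK K D F := fun x hx => ⟨hx, by simpa using h0K⟩
  simpa using (hF (hmem x₁ h₁) (hmem x₂ h₂) ha hb hab).2

theorem map_sub_eq_zero_of_mem_intrinsicInterior (hF : Convex ℝ (epiK K D F))
    (h0K : (0 : Y) ∈ K) {A : Set Y} (hA : ∀ a ∈ A, ∀ k ∈ K, a - k ∈ A) {xb : X}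
    (hxb : xb ∈ intrinsicInterior ℝ D) (hFxb : F xb ∈ intrinsicInterior ℝ A)
    {φ : Y →ₗ[ℝ] ℝ} (hφ : ∀ a ∈ A, ∀ x ∈ D, φ (a - F x) ≤ 0)
    {a : Y} (ha : a ∈ A) {x : X} (hx : x ∈ D) : φ (a - F x) = 0 := by
  have hxbD := intrinsicInterior_subset hxb
  have hFxbA := intrinsicInterior_subset hFxb
  have hdirD : xb - x ∈ (affineSpan ℝ D).direction :=
    AffineSubspace.vsub_mem_direction (subset_affineSpan ℝ D hxbD) (subset_affineSpan ℝ D hx)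
  have hdirA : F xb - a ∈ (affineSpan ℝ A).direction :=
    AffineSubspace.vsub_mem_direction (subset_affineSpan ℝ A hFxbA) (subset_affineSpan ℝ A ha)
  -- Reflect `x` through `xb` and `a` through `F xb`, staying inside `D` and `A`.
  obtain ⟨δ, hδ, hx', ha'⟩ := ((eventually_add_smul_mem_of_mem_intrinsicInterior hxb hdirD).and
    (eventually_add_smul_mem_of_mem_intrinsicInterior hFxb hdirA)).exists_pos
  set x' := xb + δ • (xb - x)
  have hinv : (1 + δ) * (1 + δ)⁻¹ = 1 := mul_inv_cancel₀ (by positivity)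
  set k := (1 + δ)⁻¹ • F x' + (δ * (1 + δ)⁻¹) • F x - F xb
  have hk : k ∈ K := by
    have hcomb : (1 + δ)⁻¹ • x' + (δ * (1 + δ)⁻¹) • x = xb := by
      linear_combination (norm := module) hinv • xb
    simpa [hcomb] using sub_mem_of_convex_epiK hF h0K hx' hx (a := (1 + δ)⁻¹)
      (b := δ * (1 + δ)⁻¹) (by positivity) (by positivity) (by linear_combination hinv)
  have hdirk : k ∈ (affineSpan ℝ A).direction := by
    simpa using AffineSubspace.vsub_mem_direction (subset_affineSpan ℝ A hFxbA)
      (subset_affineSpan ℝ A (hA _ hFxbA k hk))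
  obtain ⟨ρ, hρ, hρA⟩ := (eventually_add_smul_mem_of_mem_intrinsicInterior hFxb hdirk).exists_pos
  have hφk : ρ * φ k ≤ 0 := by simpa using hφ _ hρA xb hxbD
  have hreflect : F xb + δ • (F xb - a) - F x' = (-δ) • (a - F x) - (1 + δ) • k := by
    linear_combination (norm := module) hinv • F x' + δ • hinv • F x
  have hφ' : -δ * φ (a - F x) - (1 + δ) * φ k ≤ 0 := by
    simpa [hreflect] using hφ _ ha' x' hx'
  have hφk' : φ k ≤ 0 := nonpos_of_mul_nonpos_right hφk hρ
  have := hφ a ha x hx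
  nlinarith

end QualificationCondition

namespace EReal

theorem coe_sub_le_coe_sub_add (c d : ℝ) (G : EReal) :
    (c : EReal) - G ≤ ((d : EReal) - G) + ((c - d : ℝ) : EReal) := by
  induction G using EReal.rec with
  | bot => simp only [coe_sub_bot, top_add_coe, le_refl]
  | coe G => norm_cast; linarith
  | top => simp

theorem coe_sub_le_of_coe_sub_le {c a : ℝ} {G : EReal} (h : (c : EReal) - G ≤ a) :
    ((c - a : ℝ) : EReal) ≤ G := by
  induction G using EReal.rec with
  | bot => simp at h
  | coe G => norm_cast at h ⊢; linarith
  | top => exact le_top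

theorem coe_sub_add_le_of_le {c d a : ℝ} {G : EReal} (h : ((c + d - a : ℝ) : EReal) ≤ G) :
    ((c : EReal) - G) + d ≤ a := by
  induction G using EReal.rec with
  | bot => exact absurd (le_bot_iff.1 h) (coe_ne_bot _)
  | coe G => norm_cast at h ⊢; linarith
  | top => simp

end EReal

section Conjugate

variable {P : Type*} [NormedAddCommGroup P] [InnerProductSpace ℝ P]

theorem le_econj (f : P → EReal) (y x : P) : ((⟪y, x⟫ : ℝ) : EReal) - f x ≤ econj f y :=
  le_iSup (fun x => ((⟪y, x⟫ : ℝ) : EReal) - f x) x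

theorem econj_ne_bot {f : P → EReal} {x : P} (hx : f x < ⊤) (y : P) : econj f y ≠ ⊥ := by
  obtain ⟨r, hr, -⟩ := EReal.lt_iff_exists_real_btwn.1 hx
  have hle : ((⟪y, x⟫ - r : ℝ) : EReal) ≤ ((⟪y, x⟫ : ℝ) : EReal) - f x := by
    rw [EReal.coe_sub]
    exact EReal.sub_le_sub le_rfl hr.le
  exact ne_bot_of_le_ne_bot (EReal.coe_ne_bot _) (hle.trans (le_econj f y x))

end Conjugate

section Perturbation

variable {X Y : Type*} [NormedAddCommGroup X] [InnerProductSpace ℝ X] [AddCommGroup Y]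
  {K : Set Y} {D : Set X} {F : X → Y} {g : Y → EReal} {p : X} {a : ℝ}

/-- The strict epigraph of the perturbation function
`z ↦ a + inf {g y - ⟪p, x⟫ | x ∈ D, y ∈ F x + z + K}`. -/
def perturbEpi (K : Set Y) (D : Set X) (F : X → Y) (g : Y → EReal) (p : X) (a : ℝ) :
    Set (Y × ℝ) :=
  {q | ∃ x ∈ D, ∃ y, y - F x - q.1 ∈ K ∧ g y < ((⟪p, x⟫ + q.2 - a : ℝ) : EReal)}

theorem convex_perturbEpi [Module ℝ Y] (hF : Convex ℝ (epiK K D F)) (hg : EConvexOn g) :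
    Convex ℝ (perturbEpi K D F g p a) := by
  rintro ⟨z₁, r₁⟩ ⟨x₁, hx₁, y₁, hk₁, hg₁⟩ ⟨z₂, r₂⟩ ⟨x₂, hx₂, y₂, hk₂, hg₂⟩ s t hs ht hst
  have hepi := hF (x := (x₁, y₁ - z₁)) ⟨hx₁, by simpa [sub_right_comm] using hk₁⟩
    (y := (x₂, y₂ - z₂)) ⟨hx₂, by simpa [sub_right_comm] using hk₂⟩ hs ht hst
  have hstrict : g (s • y₁ + t • y₂) <
      ((s * (⟪p, x₁⟫ + r₁ - a) + t * (⟪p, x₂⟫ + r₂ - a) : ℝ) : EReal) := by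
    simpa using hg.convex_strictEpigraph (x := (y₁, ⟪p, x₁⟫ + r₁ - a)) hg₁
      (y := (y₂, ⟪p, x₂⟫ + r₂ - a)) hg₂ hs ht hst
  refine ⟨s • x₁ + t • x₂, hepi.1, s • y₁ + t • y₂, ?_, ?_⟩
  · convert hepi.2 using 1
    simp only [Prod.smul_mk, Prod.mk_add_mk]
    module
  · refine hstrict.trans_eq (congrArg _ ?_)
    simp only [Prod.smul_mk, Prod.mk_add_mk, smul_eq_mul, inner_add_right,
      real_inner_smul_right]
    linear_combination (-a) * hst

theorem mem_perturbEpi_of_le {z : Y} {r r' : ℝ} (h : (z, r) ∈ perturbEpi K D F g p a)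
    (hr : r ≤ r') : (z, r') ∈ perturbEpi K D F g p a := by
  obtain ⟨x, hx, y, hk, hgy⟩ := h
  exact ⟨x, hx, y, hk, hgy.trans_le (by exact_mod_cast (by linarith))⟩

theorem mk_mem_perturbEpi {x : X} (hx : x ∈ D) {y k : Y} (hk : k ∈ K) {s : ℝ} (hs : g y < s) :
    (y - k - F x, s - ⟪p, x⟫ + a) ∈ perturbEpi K D F g p a :=
  ⟨x, hx, y, by simpa using hk, by convert hs using 2; ring⟩

theorem sub_mem_perturbEpi [Module ℝ Y] (hK_cone : IsCone K) (hK_conv : Convex ℝ K)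
    {z : Y} {r : ℝ} (h : (z, r) ∈ perturbEpi K D F g p a) {k : Y} (hk : k ∈ K) :
    (z - k, r) ∈ perturbEpi K D F g p a := by
  obtain ⟨x, hx, y, hk', hgy⟩ := h
  have hsum := hK_cone.add_mem hK_conv hk' hk
  exact ⟨x, hx, y, by rwa [sub_sub_eq_add_sub, add_sub_right_comm], hgy⟩

theorem exists_fst_eq_of_mem_perturbEpi {q : Y × ℝ} (hq : q ∈ perturbEpi K D F g p a) :
    ∃ w ∈ edom g - K, ∃ x ∈ D, q.1 = w - F x := by
  obtain ⟨x, hx, y, hk, hgy⟩ := hq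
  exact ⟨y - (y - F x - q.1), ⟨y, hgy.trans (EReal.coe_lt_top _), _, hk, rfl⟩, x, hx, by abel⟩

theorem zero_not_mem_perturbEpi (hM : ∀ q ∈ epiK K D F, g (F q.1) ≤ g q.2)
    (h_le : ∀ x ∈ D, ((⟪p, x⟫ - a : ℝ) : EReal) ≤ g (F x)) :
    ((0 : Y), (0 : ℝ)) ∉ perturbEpi K D F g p a := by
  rintro ⟨x, hx, y, hk, hgy⟩
  have := (h_le x hx).trans_lt ((hM (x, y) ⟨hx, by simpa using hk⟩).trans_lt hgy)
  simp at this

end Perturbation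

section Duality

variable {X Y : Type*} [NormedAddCommGroup X] [InnerProductSpace ℝ X]
  [NormedAddCommGroup Y] [InnerProductSpace ℝ Y]
  {K : Set Y} {D : Set X} {F : X → Y} {g : Y → EReal} {p : X} {a : ℝ}

theorem neg_mem_polarCone_of_forall_inner_le (hK_cone : IsCone K) (hK_conv : Convex ℝ K)
    {v : Y} (hv : ∀ q ∈ perturbEpi K D F g p a, ⟪v, q.1⟫ ≤ q.2) {q : Y × ℝ}
    (hq : q ∈ perturbEpi K D F g p a) : v ∈ -polarCone K := fun k hk => by
  rw [inner_neg_left]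
  refine nonpos_of_forall_add_mul_le (a := ⟪v, q.1⟫) (c := q.2) fun t ht => ?_
  have := hv _ (sub_mem_perturbEpi hK_cone hK_conv hq (hK_cone ht hk))
  rw [inner_sub_right, real_inner_smul_right] at this
  linarith

theorem coe_le_of_forall_inner_le {v : Y} (hv : ∀ q ∈ perturbEpi K D F g p a, ⟪v, q.1⟫ ≤ q.2)
    (h0K : (0 : Y) ∈ K) {x : X} (hx : x ∈ D) (y : Y) :
    ((⟪p, x⟫ + ⟪v, y - F x⟫ - a : ℝ) : EReal) ≤ g y := by
  refine EReal.le_of_forall_lt_iff_le.1 fun s hs => ?_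
  have := hv _ (mk_mem_perturbEpi hx h0K hs)
  rw [sub_zero] at this
  exact_mod_cast (by linarith : ⟪p, x⟫ + ⟪v, y - F x⟫ - a ≤ s)

theorem exists_forall_inner_le_of_mem_intrinsicInterior [FiniteDimensional ℝ Y]
    (hK_cone : IsCone K) (hK_conv : Convex ℝ K) (hF : Convex ℝ (epiK K D F))
    (hg : EConvexOn g) (hM : ∀ q ∈ epiK K D F, g (F q.1) ≤ g q.2) {xb : X}
    (hxb : xb ∈ intrinsicInterior ℝ D) (hFxb : F xb ∈ intrinsicInterior ℝ (edom g - K))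
    (h_le : ∀ x ∈ D, ((⟪p, x⟫ - a : ℝ) : EReal) ≤ g (F x)) :
    ∃ v ∈ -polarCone K, ∀ q ∈ perturbEpi K D F g p a, ⟪v, q.1⟫ ≤ q.2 := by
  obtain ⟨y₀, hy₀, k₀, hk₀, hyk⟩ := intrinsicInterior_subset hFxb
  obtain ⟨s, hs, -⟩ := EReal.lt_iff_exists_real_btwn.1 hy₀
  have hr₀ : ((0 : Y), s - ⟪p, xb⟫ + a) ∈ perturbEpi K D F g p a := by
    simpa [hyk] using mk_mem_perturbEpi (F := F) (p := p) (a := a)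
      (intrinsicInterior_subset hxb) hk₀ hs
  obtain ⟨φ, c, hc, hφT, q, hq, hφq⟩ := exists_proper_separation_of_upwardClosed
    (convex_perturbEpi hF hg) (fun _ _ _ => mem_perturbEpi_of_le) hr₀
    (zero_not_mem_perturbEpi hM h_le)
  rcases hc.eq_or_lt with rfl | hc
  · -- A vertical separating hyperplane would contradict the qualification condition.
    have hA : ∀ w ∈ edom g - K, ∀ k ∈ K, w - k ∈ edom g - K := by
      rintro _ ⟨y, hy, k', hk', rfl⟩ k hk
      exact ⟨y, hy, k' + k, hK_cone.add_mem hK_conv hk' hk, (sub_sub y k' k).symm⟩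
    have hφ : ∀ w ∈ edom g - K, ∀ x ∈ D, (φ : Y →ₗ[ℝ] ℝ) (w - F x) ≤ 0 := by
      rintro _ ⟨y, hy, k, hk, rfl⟩ x hx
      obtain ⟨s, hs, -⟩ := EReal.lt_iff_exists_real_btwn.1 hy
      simpa using hφT _ (mk_mem_perturbEpi (p := p) (a := a) hx hk hs)
    obtain ⟨w, hw, x, hx, hqw⟩ := exists_fst_eq_of_mem_perturbEpi hq
    have := map_sub_eq_zero_of_mem_intrinsicInterior hF (hK_cone.zero_mem ⟨k₀, hk₀⟩) hA hxb
      hFxb hφ hw hx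
    rw [hqw, zero_mul] at hφq
    exact absurd this hφq.ne
  · set v := c⁻¹ • (InnerProductSpace.toDual ℝ Y).symm φ
    have hv : ∀ q ∈ perturbEpi K D F g p a, ⟪v, q.1⟫ ≤ q.2 := fun q hq => by
      rw [real_inner_smul_left, InnerProductSpace.toDual_symm_apply, inv_mul_le_iff₀ hc]
      exact hφT q hq
    exact ⟨v, neg_mem_polarCone_of_forall_inner_le hK_cone hK_conv hv hr₀, hv⟩

theorem econj_compFn_le (p : X) (v : Y) :
    econj (compFn g D F) p ≤ econj g v + econj (scal v D F) p := by
  refine iSup_le fun x => ?_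
  by_cases hx : x ∈ D
  · have hscal := le_econj (scal v D F) p x
    simp only [scal, if_pos hx, ← EReal.coe_sub] at hscal
    simp only [compFn, if_pos hx]
    exact (EReal.coe_sub_le_coe_sub_add _ _ _).trans (add_le_add (le_econj g v (F x)) hscal)
  · simp [compFn, hx]

theorem econj_add_econj_scal_le {v : Y}
    (h : ∀ x ∈ D, ∀ y, ((⟪p, x⟫ + ⟪v, y - F x⟫ - a : ℝ) : EReal) ≤ g y) :
    econj g v + econj (scal v D F) p ≤ a := by
  refine EReal.add_le_of_forall_lt fun b hb b' hb' => ?_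
  obtain ⟨y, hy⟩ := lt_iSup_iff.1 hb
  obtain ⟨x, hx⟩ := lt_iSup_iff.1 hb'
  by_cases hxD : x ∈ D
  · simp only [scal, if_pos hxD, ← EReal.coe_sub] at hx
    refine (add_le_add hy.le hx.le).trans (EReal.coe_sub_add_le_of_le ?_)
    convert h x hxD y using 2
    rw [inner_sub_right]
    ring
  · simp [scal, hxD] at hx

theorem exists_mem_neg_polarCone_add_econj_le [FiniteDimensional ℝ Y]
    (hK_cone : IsCone K) (hK_conv : Convex ℝ K) (hF : Convex ℝ (epiK K D F))
    (hg : EConvexOn g) (hM : ∀ q ∈ epiK K D F, g (F q.1) ≤ g q.2) {xb : X}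
    (hxb : xb ∈ intrinsicInterior ℝ D) (hFxb : F xb ∈ intrinsicInterior ℝ (edom g - K))
    (p : X) : ∃ v ∈ -polarCone K, econj g v + econj (scal v D F) p ≤ econj (compFn g D F) p := by
  have hxbD := intrinsicInterior_subset hxb
  obtain ⟨y₀, hy₀, k₀, hk₀, hyk⟩ := intrinsicInterior_subset hFxb
  have h0K := hK_cone.zero_mem ⟨k₀, hk₀⟩
  by_cases htop : econj (compFn g D F) p = ⊤
  · exact ⟨0, fun k _ => by simp, htop ▸ le_top⟩
  have hgFxb : compFn g D F xb < ⊤ := by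
    simp only [compFn, if_pos hxbD]
    exact (hM (xb, y₀) ⟨hxbD, by simpa [← hyk] using hk₀⟩).trans_lt hy₀
  set a := (econj (compFn g D F) p).toReal
  have ha : econj (compFn g D F) p = a := (EReal.coe_toReal htop (econj_ne_bot hgFxb p)).symm
  have h_le : ∀ x ∈ D, ((⟪p, x⟫ - a : ℝ) : EReal) ≤ g (F x) := fun x hx =>
    EReal.coe_sub_le_of_coe_sub_le (by simpa [compFn, hx, ha] using le_econj (compFn g D F) p x)
  obtain ⟨v, hvK, hv⟩ := exists_forall_inner_le_of_mem_intrinsicInterior hK_cone hK_conv hF hg hM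
    hxb hFxb h_le
  exact ⟨v, hvK, ha ▸ econj_add_econj_scal_le fun x hx y => coe_le_of_forall_inner_le hv h0K hx y⟩

end Duality

theorem conjugate_of_composite_attained_general
    (K : Set E₂) (hK_cone : IsCone K) (hK_conv : Convex ℝ K)
    (D : Set E₁) (F : E₁ → E₂) (hF : Convex ℝ (epiK K D F))
    (g : E₂ → EReal) (hg_conv : EConvexOn g)
    (hM : ∀ p ∈ epiK K D F, g (F p.1) ≤ g p.2)
    (hCQ : (F '' intrinsicInterior ℝ D ∩ intrinsicInterior ℝ (edom g - K)).Nonempty) :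
    (∀ p : E₁, ∃ v ∈ -polarCone K,
      econj (compFn g D F) p = econj g v + econj (scal v D F) p ∧
      ∀ w ∈ -polarCone K,
        econj g v + econj (scal v D F) p ≤ econj g w + econj (scal w D F) p) ∧
    edom (econj (compFn g D F))
      = {p : E₁ | ∃ v ∈ edom (econj g) ∩ (-polarCone K), econj (scal v D F) p < ⊤} := by
  obtain ⟨_, ⟨xb, hxb, rfl⟩, hFxb⟩ := hCQ
  have hattain := exists_mem_neg_polarCone_add_econj_le hK_cone hK_conv hF hg_conv hM hxb hFxb
  refine ⟨fun p => ?_, Set.ext fun p => ⟨fun hp => ?_, ?_⟩⟩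
  · obtain ⟨v, hv, hle⟩ := hattain p
    exact ⟨v, hv, le_antisymm (econj_compFn_le p v) hle,
      fun w _ => hle.trans (econj_compFn_le p w)⟩
  · obtain ⟨v, hv, hle⟩ := hattain p
    obtain ⟨y₀, hy₀, -⟩ := intrinsicInterior_subset hFxb
    have hscal : scal v D F xb < ⊤ := by simp [scal, intrinsicInterior_subset hxb]
    have := (EReal.add_ne_top_iff_ne_top₂ (econj_ne_bot hy₀ v) (econj_ne_bot hscal p)).1
      (hle.trans_lt hp).ne
    exact ⟨v, ⟨this.1.lt_top, hv⟩, this.2.lt_top⟩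
  · rintro ⟨v, ⟨hg, -⟩, hscal⟩
    exact (econj_compFn_le p v).trans_lt (EReal.add_lt_top hg.ne hscal.ne)

/-- Under the Slater-type qualification condition
`F(ri(dom F)) ∩ ri(dom g - K) ≠ ∅`, the conjugate of the composite is
`(g ∘ F)*(p) = min_{v ∈ -K°} (g*(v) + ⟨v,F⟩*(p))`, the minimum being attained, and
`dom (g ∘ F)* = {p : ∃ v ∈ dom g* ∩ (-K°), ⟨v,F⟩*(p) < +∞}`. -/
theorem conjugate_of_composite_attained
    (K : Set E₂) (hK_cone : IsCone K) (hK_closed : IsClosed K) (hK_conv : Convex ℝ K)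
    (D : Set E₁) (hD : D.Nonempty) (F : E₁ → E₂) (hF : Convex ℝ (epiK K D F))
    (g : E₂ → EReal) (hg_proper : EProper g) (hg_conv : EConvexOn g)
    (hM : ∀ p ∈ epiK K D F, g (F p.1) ≤ g p.2)
    (hCQ : (F '' intrinsicInterior ℝ D ∩ intrinsicInterior ℝ (edom g - K)).Nonempty) :
    (∀ p : E₁, ∃ v ∈ -polarCone K,
      econj (compFn g D F) p = econj g v + econj (scal v D F) p ∧
      ∀ w ∈ -polarCone K,
        econj g v + econj (scal v D F) p ≤ econj g w + econj (scal w D F) p) ∧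
    edom (econj (compFn g D F))
      = {p : E₁ | ∃ v ∈ edom (econj g) ∩ (-polarCone K), econj (scal v D F) p < ⊤} :=
  conjugate_of_composite_attained_general K hK_cone hK_conv D F hF g hg_conv hM hCQ
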